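/- Let n, k, ℓ be positive integers with 2(k+ℓ) < n, let 0 ≤ c ≤ k and let I, J be subsets of {1,…,ℓ} with |I| ≤ k − c. Then the determinant η_{(c,I,J)} is fixed by every element of U_n × U_k acting on P_{n,k,ℓ}; that is, η_{(c,I,J)} ∈ 𝔄_{n,k,ℓ}. -/

import Mathlib

open MvPolynomial TensorProduct
open scoped Classical

noncomputable section

namespace Pieri

/-! ### Young diagrams and skew Kostka numbers.

A Young diagram is encoded as a finitely supported function `D : ℕ →₀ ℕ`
(0-indexed: `D i` is the length of row `i+1`), weakly decreasing. -/

def IsYoung (D : ℕ →₀ ℕ) : Prop := ∀ i, D (i + 1) ≤ D i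

/-- `|D|`, the number of boxes. -/
def ysize (D : ℕ →₀ ℕ) : ℕ := D.sum fun _ e => e

/-- `Interlaces A B` : `A ⊒ B`, i.e. `a_j ≥ b_j ≥ a_{j+1}` for all `j`. -/
def Interlaces (A B : ℕ →₀ ℕ) : Prop := ∀ j, B j ≤ A j ∧ A (j + 1) ≤ B j

/-- Semistandard skew tableau of shape `F/E` with entries in `{1,…,m}` and content `M`.
The filling `T` is normalized to be `0` outside the boxes of `F/E`. -/
def IsSkewSSYT (E F : ℕ →₀ ℕ) (m : ℕ) (M : Fin m → ℕ) (T : ℕ × ℕ → ℕ) : Prop :=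
  (∀ i, E i ≤ F i) ∧
  (∀ i j, E i ≤ j → j < F i → 1 ≤ T (i, j) ∧ T (i, j) ≤ m) ∧
  (∀ i j, ¬(E i ≤ j ∧ j < F i) → T (i, j) = 0) ∧
  (∀ i j, E i ≤ j → j + 1 < F i → T (i, j) ≤ T (i, j + 1)) ∧
  (∀ i j, E i ≤ j → j < F i → E (i + 1) ≤ j → j < F (i + 1) → T (i, j) < T (i + 1, j)) ∧
  (∀ r : Fin m, Set.ncard {c : ℕ × ℕ | E c.1 ≤ c.2 ∧ c.2 < F c.1 ∧ T c = (r : ℕ) + 1} = M r)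

/-- The skew Kostka number `K_{F/E, M}`. -/
def kostka (E F : ℕ →₀ ℕ) (m : ℕ) (M : Fin m → ℕ) : ℕ :=
  Set.ncard {T : ℕ × ℕ → ℕ | IsSkewSSYT E F m M T}

/-! ### The posets `Γ(k,ℓ)` and `Γ̃(k,ℓ)` and the lattice cone `Ω(k,ℓ)`. -/

/-- Ambient type containing `Γ̃(k,ℓ)`: `Sum.inl (i,j)` encodes `γ_j^(i)`,
`Sum.inr (s,t)` encodes `ε_{s,t}`. -/
abbrev GammaAmb : Type := (ℤ × ℕ) ⊕ (ℕ × ℕ)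

def gammaSet (k l : ℕ) : Set (ℤ × ℕ) :=
  {p | -(l : ℤ) ≤ p.1 ∧ p.1 ≤ (l : ℤ) ∧ 1 ≤ p.2 ∧ (p.2 : ℤ) ≤ (k : ℤ) + max 0 p.1}

def epsSet (l : ℕ) : Set (ℕ × ℕ) := {p | 1 ≤ p.1 ∧ p.1 < p.2 ∧ p.2 ≤ l}

def gammaTildeSet (k l : ℕ) : Set GammaAmb :=
  Sum.inl '' gammaSet k l ∪ Sum.inr '' epsSet l

/-- One-step generating relations of the partial order of `Γ(k,ℓ)`:
`gammaStep k l a b` means "`a ≥ b`" is one of the defining relations. -/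
def gammaStep (k l : ℕ) : ℤ × ℕ → ℤ × ℕ → Prop := fun a b =>
  (∃ i j : ℕ, i < l ∧ 1 ≤ j ∧ j ≤ k + i ∧ a = ((i : ℤ) + 1, j) ∧ b = ((i : ℤ), j)) ∨
  (∃ i j : ℕ, i < l ∧ 1 ≤ j ∧ j ≤ k + i ∧ a = ((i : ℤ), j) ∧ b = ((i : ℤ) + 1, j + 1)) ∨
  (∃ i j : ℕ, i < l ∧ 1 ≤ j ∧ j ≤ k ∧ a = (-(i : ℤ) - 1, j) ∧ b = (-(i : ℤ), j)) ∨
  (∃ i j : ℕ, i < l ∧ 1 ≤ j ∧ j + 1 ≤ k ∧ a = (-(i : ℤ), j) ∧ b = (-(i : ℤ) - 1, j + 1))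

/-- `gammaGE k l a b` : `a ≥ b` in the partial order of `Γ(k,ℓ)` generated by the relations. -/
def gammaGE (k l : ℕ) : ℤ × ℕ → ℤ × ℕ → Prop := Relation.ReflTransGen (gammaStep k l)

/-- `tildeGE k l a b` : `a ≥ b` in `Γ̃(k,ℓ)`; each `ε_{s,t}` is comparable only with itself. -/
def tildeGE (k l : ℕ) : GammaAmb → GammaAmb → Prop := fun a b =>
  (∃ p q, a = Sum.inl p ∧ b = Sum.inl q ∧ gammaGE k l p q) ∨ a = b

/-- `Ω(k,ℓ)`, the additive monoid of order-preserving functions `Γ̃(k,ℓ) → ℤ_{≥0}`,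
encoded as functions on the ambient type vanishing outside `Γ̃(k,ℓ)`. -/
def OmegaM (k l : ℕ) : AddSubmonoid (GammaAmb → ℕ) where
  carrier := {f | (∀ a b, tildeGE k l a b → f b ≤ f a) ∧
    ∀ p, p ∉ gammaTildeSet k l → f p = 0}
  add_mem' := by
    rintro f g ⟨hf1, hf2⟩ ⟨hg1, hg2⟩
    refine ⟨fun a b h => add_le_add (hf1 a b h) (hg1 a b h), fun p hp => ?_⟩
    simp [Pi.add_apply, hf2 p hp, hg2 p hp]
  zero_mem' := ⟨fun _ _ _ => le_rfl, fun _ _ => rfl⟩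

def Omega (k l : ℕ) : Set (GammaAmb → ℕ) := OmegaM k l

/-- `f_{i,j}` as an integer. -/
def fval (f : GammaAmb → ℕ) (i : ℤ) (j : ℕ) : ℤ := (f (Sum.inl (i, j)) : ℤ)

/-- `A_j(f)`. -/
def Afun (k : ℕ) (f : GammaAmb → ℕ) (j : ℕ) : ℤ :=
  (∑ a ∈ Finset.Icc 1 (k + j), fval f (j : ℤ) a)
    - ∑ b ∈ Finset.Icc 1 (k + j - 1), fval f ((j : ℤ) - 1) b

/-- `B_j(f)`. -/
def Bfun (k : ℕ) (f : GammaAmb → ℕ) (j : ℕ) : ℤ :=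
  ∑ a ∈ Finset.Icc 1 k, (fval f (-(j : ℤ)) a - fval f (-(j : ℤ) + 1) a)

/-- `P_j(f)`. -/
def Pfun (k l : ℕ) (f : GammaAmb → ℕ) (j : ℕ) : ℤ :=
  Afun k f j + Bfun k f j + (∑ a ∈ Finset.Ico 1 j, (f (Sum.inr (a, j)) : ℤ))
    + ∑ b ∈ Finset.Icc (j + 1) l, (f (Sum.inr (j, b)) : ℤ)

/-- `Ω_{F,D,P}` : the elements `f ∈ Ω(k,ℓ)` with `f_{-ℓ} = D`, `f_ℓ = F` and `P(f) = P`. -/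
def OmegaFDP (k l : ℕ) (D F : ℕ →₀ ℕ) (P : Fin l → ℕ) : Set (GammaAmb → ℕ) :=
  {f ∈ Omega k l |
    (∀ a : ℕ, 1 ≤ a → a ≤ k → f (Sum.inl (-(l : ℤ), a)) = D (a - 1)) ∧
    (∀ a : ℕ, 1 ≤ a → a ≤ k + l → f (Sum.inl ((l : ℤ), a)) = F (a - 1)) ∧
    (∀ j : Fin l, Pfun k l f ((j : ℕ) + 1) = (P j : ℤ))}

/-- `S(A,B,C)`. -/
def Scomb (l : ℕ) (A B : Fin l → ℕ) (C : ℕ × ℕ → ℕ) : Fin l → ℕ := fun i =>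
  A i + B i + (∑ s ∈ Finset.Ico 1 ((i : ℕ) + 1), C (s, (i : ℕ) + 1))
    + ∑ t ∈ Finset.Icc ((i : ℕ) + 2) l, C ((i : ℕ) + 1, t)

/-! ### Increasing subsets -/

/-- The sequence `a_i` attached to `(c, I, J)`. -/
def aSeq (c : ℕ) (I J : Finset ℕ) (i : ℤ) : ℕ :=
  if 0 ≤ i then c + (J ∩ Finset.Icc 1 i.toNat).card
  else c + (I ∩ Finset.Icc 1 (-i).toNat).card

/-- The increasing subset `A_{(c,I,J)}` of `Γ(k,ℓ)`. -/
def Acij (l c : ℕ) (I J : Finset ℕ) : Set (ℤ × ℕ) :=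
  {p | -(l : ℤ) ≤ p.1 ∧ p.1 ≤ (l : ℤ) ∧ 1 ≤ p.2 ∧ p.2 ≤ aSeq c I J p.1}

/-- The increasing subset `A_{(c,I,J)} ∪ Z` of `Γ̃(k,ℓ)`. -/
def AcijT (l c : ℕ) (I J : Finset ℕ) (Z : Finset (ℕ × ℕ)) : Set GammaAmb :=
  Sum.inl '' Acij l c I J ∪ Sum.inr '' (Z : Set (ℕ × ℕ))

def IsIncreasingG (k l : ℕ) (A : Set (ℤ × ℕ)) : Prop :=
  A ⊆ gammaSet k l ∧ ∀ a ∈ A, ∀ x ∈ gammaSet k l, gammaGE k l x a → x ∈ A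

def IsIncreasingT (k l : ℕ) (A : Set GammaAmb) : Prop :=
  A ⊆ gammaTildeSet k l ∧ ∀ a ∈ A, ∀ x ∈ gammaTildeSet k l, tildeGE k l x a → x ∈ A

/-- Characteristic function `χ_A`. -/
def chiInd (A : Set GammaAmb) : GammaAmb → ℕ := A.indicator fun _ => 1

/-! ### The polynomial algebra `P_{n,k,ℓ}` and the action of `U_n × U_k` -/

/-- Index type for the variables of `P_{n,k,ℓ}` (all indices 0-based):
`inl (i,j) ↦ x_{i+1,j+1}`, `inr (inl (i,j)) ↦ y_{i+1,j+1}`,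
`inr (inr (inl (i,j))) ↦ r_{i+1,k+j+1}`, `inr (inr (inr ((s,t),_))) ↦ r_{k+s+1,k+t+1}`. -/
abbrev VarIdx (n k l : ℕ) : Type :=
  (Fin n × Fin k) ⊕ (Fin n × Fin l) ⊕ (Fin k × Fin l) ⊕ {p : Fin l × Fin l // p.1 < p.2}

abbrev PRing (n k l : ℕ) : Type := MvPolynomial (VarIdx n k l) ℂ

/-- The variable `x_{i,j}` (1-based indices). -/
def xP (n k l : ℕ) (i j : ℕ) : PRing n k l :=
  if h : 1 ≤ i ∧ i ≤ n ∧ 1 ≤ j ∧ j ≤ k then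
    X (Sum.inl (⟨i - 1, by omega⟩, ⟨j - 1, by omega⟩)) else 0

/-- The variable `y_{i,j}` (1-based indices). -/
def yP (n k l : ℕ) (i j : ℕ) : PRing n k l :=
  if h : 1 ≤ i ∧ i ≤ n ∧ 1 ≤ j ∧ j ≤ l then
    X (Sum.inr (Sum.inl (⟨i - 1, by omega⟩, ⟨j - 1, by omega⟩))) else 0

/-- The variable `r_{i,k+j}` (1-based `i ≤ k`, `j ≤ l`). -/
def rP (n k l : ℕ) (i j : ℕ) : PRing n k l :=
  if h : 1 ≤ i ∧ i ≤ k ∧ 1 ≤ j ∧ j ≤ l then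
    X (Sum.inr (Sum.inr (Sum.inl (⟨i - 1, by omega⟩, ⟨j - 1, by omega⟩)))) else 0

/-- The variable `r_{k+s,k+t}` (1-based, `1 ≤ s < t ≤ l`). -/
def sP (n k l : ℕ) (s t : ℕ) : PRing n k l :=
  if h : 1 ≤ s ∧ s < t ∧ t ≤ l then
    X (Sum.inr (Sum.inr (Sum.inr ⟨(⟨s - 1, by omega⟩, ⟨t - 1, by omega⟩),
      by exact Fin.mk_lt_mk.mpr (by omega)⟩))) else 0

/-- Upper triangular unipotent matrices. -/
def IsUU {m : ℕ} (g : Matrix (Fin m) (Fin m) ℂ) : Prop :=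
  (∀ i, g i i = 1) ∧ ∀ i j : Fin m, j < i → g i j = 0

/-- The action of a pair of matrices `(g,h)` on `P_{n,k,ℓ}`:
`x_{i,j} ↦ (gᵀXh)_{i,j}`, `y_{i,j} ↦ (gᵀY_j)_i`, `r_{i,k+j} ↦ (hᵀR_j)_i`,
`r_{k+s,k+t} ↦ r_{k+s,k+t}`. -/
def uAct (n k l : ℕ) (g : Matrix (Fin n) (Fin n) ℂ) (h : Matrix (Fin k) (Fin k) ℂ) :
    PRing n k l →ₐ[ℂ] PRing n k l :=
  aeval fun v => match v with
    | Sum.inl (i, j) => ∑ a : Fin n, ∑ b : Fin k, C (g a i * h b j) * X (Sum.inl (a, b))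
    | Sum.inr (Sum.inl (i, j)) => ∑ a : Fin n, C (g a i) * X (Sum.inr (Sum.inl (a, j)))
    | Sum.inr (Sum.inr (Sum.inl (i, j))) =>
        ∑ b : Fin k, C (h b i) * X (Sum.inr (Sum.inr (Sum.inl (b, j))))
    | Sum.inr (Sum.inr (Sum.inr st)) => X (Sum.inr (Sum.inr (Sum.inr st)))

/-- The Pieri algebra `𝔄_{n,k,ℓ} = (P_{n,k,ℓ})^{U_n × U_k}`. -/
def invariants (n k l : ℕ) : Subalgebra ℂ (PRing n k l) where
  carrier := {f | ∀ g h, IsUU g → IsUU h → uAct n k l g h f = f}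
  mul_mem' := by
    intro a b ha hb g h hg hh
    rw [map_mul, ha g h hg hh, hb g h hg hh]
  add_mem' := by
    intro a b ha hb g h hg hh
    rw [map_add, ha g h hg hh, hb g h hg hh]
  one_mem' := fun g h _ _ => map_one _
  zero_mem' := fun g h _ _ => map_zero _
  algebraMap_mem' := fun c g h _ _ => (uAct _ _ _ g h).commutes c

/-! ### The graded lexicographic order -/

/-- Rank of a variable: smaller rank = bigger variable in the order
`x_{1,1} > x_{2,1} > ⋯ > x_{n,k} > y_{1,1} > ⋯ > y_{n,ℓ} > r_{1,k+1} > ⋯ > r_{k,k+ℓ}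
> r_{k+1,k+2} > r_{k+1,k+3} > r_{k+2,k+3} > ⋯ > r_{k+ℓ-1,k+ℓ}`. -/
def vrank (n k l : ℕ) : VarIdx n k l → ℕ
  | Sum.inl (i, j) => j.val * n + i.val
  | Sum.inr (Sum.inl (i, j)) => n * k + j.val * n + i.val
  | Sum.inr (Sum.inr (Sum.inl (i, j))) => n * k + n * l + j.val * k + i.val
  | Sum.inr (Sum.inr (Sum.inr ⟨(s, t), _⟩)) =>
      n * k + n * l + k * l + t.val * (t.val - 1) / 2 + s.val

/-- Total degree of an exponent vector. -/
def mdeg {n k l : ℕ} (α : VarIdx n k l →₀ ℕ) : ℕ := α.sum fun _ e => e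

/-- `grlexLT n k l α β` : the monomial `x^α` is smaller than `x^β` in the graded
lexicographic order. -/
def grlexLT (n k l : ℕ) (α β : VarIdx n k l →₀ ℕ) : Prop :=
  mdeg α < mdeg β ∨ (mdeg α = mdeg β ∧
    ∃ v, α v < β v ∧ ∀ w, vrank n k l w < vrank n k l v → α w = β w)

/-- `IsLeadMon n k l f α` : `x^α` is the leading monomial of `f`. -/
def IsLeadMon (n k l : ℕ) (f : PRing n k l) (α : VarIdx n k l →₀ ℕ) : Prop :=
  α ∈ f.support ∧ ∀ β ∈ f.support, β ≠ α → grlexLT n k l β α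

/-! ### The determinants `η_{(c,I,J)}` -/

/-- The determinant `η_{(c,I,J)}`. -/
def eta (n k l : ℕ) (c : ℕ) (I J : Finset ℕ) : PRing n k l :=
  Matrix.det (Matrix.of fun a b : Fin (c + I.card + J.card) =>
    if a.val < c + J.card then
      if b.val < c + I.card then xP n k l (a.val + 1) (b.val + 1)
      else yP n k l (a.val + 1) ((J.sort (· ≤ ·)).getD (b.val - (c + I.card)) 0)
    else
      if b.val < c + I.card then
        rP n k l (b.val + 1) ((I.sort (· ≤ ·)).getD (a.val - (c + J.card)) 0)
      else 0)

/-- `η_{χ_B}` for `B = A_{(c,I,J)} ∪ Z`. -/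
def etaChi (n k l : ℕ) (c : ℕ) (I J : Finset ℕ) (Z : Finset (ℕ × ℕ)) : PRing n k l :=
  eta n k l c I J * ∏ p ∈ Z, sP n k l p.1 p.2

/-- `IsEtaOf n k l g q` : `q = ∏_j η_{χ_{A_j}}^{c_j}` for some expression
`g = ∑_j c_j χ_{A_j}` with `A_1 ⊆ ⋯ ⊆ A_N` a chain of increasing subsets of `Γ̃(k,ℓ)`. -/
def IsEtaOf (n k l : ℕ) (g : GammaAmb → ℕ) (q : PRing n k l) : Prop :=
  ∃ (N : ℕ) (co : Fin N → ℕ) (A : Fin N → Set GammaAmb) (fac : Fin N → PRing n k l),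
    (∀ j, IsIncreasingT k l (A j)) ∧
    (∀ j j' : Fin N, j ≤ j' → A j ⊆ A j') ∧
    (g = ∑ j : Fin N, co j • chiInd (A j)) ∧
    (∀ j, ∃ (c : ℕ) (I J : Finset ℕ) (Z : Finset (ℕ × ℕ)),
      c ≤ k ∧ I ⊆ Finset.Icc 1 l ∧ J ⊆ Finset.Icc 1 l ∧ I.card ≤ k - c ∧
      (↑Z : Set (ℕ × ℕ)) ⊆ epsSet l ∧ A j = AcijT l c I J Z ∧
      fac j = etaChi n k l c I J Z) ∧
    q = ∏ j : Fin N, fac j ^ co j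

/-- The monomial `m(g)` attached to `g ∈ Ω(k,ℓ)`. -/
def mOf (n k l : ℕ) (g : GammaAmb → ℕ) : PRing n k l :=
  (∏ u ∈ Finset.Icc 1 k, xP n k l u u ^ g (Sum.inl ((0 : ℤ), u)))
  * (∏ b ∈ Finset.Icc 1 l, ∏ a ∈ Finset.Icc 1 (k + b),
      yP n k l a b ^ (g (Sum.inl ((b : ℤ), a)) - g (Sum.inl ((b : ℤ) - 1, a))))
  * (∏ j ∈ Finset.Icc 1 l, ∏ i ∈ Finset.Icc 1 k,
      rP n k l i j ^ (g (Sum.inl (-(j : ℤ), i)) - g (Sum.inl (-(j : ℤ) + 1, i))))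
  * (∏ t ∈ Finset.Icc 1 l, ∏ s ∈ Finset.Ico 1 t, sP n k l s t ^ g (Sum.inr (s, t)))

/-! ### The homogeneous components `E_{F,D,P}` -/

/-- `f` is homogeneous of degree `d` in the set `S` of variables. -/
def HomogOn (n k l : ℕ) (f : PRing n k l) (S : Set (VarIdx n k l)) (d : ℕ) : Prop :=
  ∀ α ∈ f.support, (∑ v ∈ α.support, S.indicator (fun w => α w) v) = d

/-- The variables `x_{i,1},…,x_{i,k}, y_{i,1},…,y_{i,ℓ}` (1-based `i`). -/
def rowSet (n k l : ℕ) (i : ℕ) : Set (VarIdx n k l) :=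
  {v | match v with
    | Sum.inl (a, _) => (a : ℕ) + 1 = i
    | Sum.inr (Sum.inl (a, _)) => (a : ℕ) + 1 = i
    | _ => False}

/-- The variables `x_{1,j},…,x_{n,j}, r_{j,k+1},…,r_{j,k+ℓ}` (1-based `j`). -/
def colSet (n k l : ℕ) (j : ℕ) : Set (VarIdx n k l) :=
  {v | match v with
    | Sum.inl (_, b) => (b : ℕ) + 1 = j
    | Sum.inr (Sum.inr (Sum.inl (b, _))) => (b : ℕ) + 1 = j
    | _ => False}

/-- The variables `y_{1,t},…,y_{n,t}, r_{1,k+t},…,r_{k,k+t}`, `r_{k+s,k+t} (s<t)`,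
`r_{k+t,k+t'} (t<t')` (1-based `t`). -/
def tSet (n k l : ℕ) (t : ℕ) : Set (VarIdx n k l) :=
  {v | match v with
    | Sum.inr (Sum.inl (_, b)) => (b : ℕ) + 1 = t
    | Sum.inr (Sum.inr (Sum.inl (_, b))) => (b : ℕ) + 1 = t
    | Sum.inr (Sum.inr (Sum.inr ⟨(s, u), _⟩)) => (s : ℕ) + 1 = t ∨ (u : ℕ) + 1 = t
    | _ => False}

theorem homogOn_add {n k l : ℕ} {f g : PRing n k l} {S : Set (VarIdx n k l)} {d : ℕ}
    (hf : HomogOn n k l f S d) (hg : HomogOn n k l g S d) : HomogOn n k l (f + g) S d := by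
  intro α hα
  by_cases h : α ∈ f.support
  · exact hf α h
  · refine hg α ?_
    by_contra hg'
    refine MvPolynomial.mem_support_iff.mp hα ?_
    rw [MvPolynomial.coeff_add, MvPolynomial.notMem_support_iff.mp h,
      MvPolynomial.notMem_support_iff.mp hg', add_zero]

/-- The homogeneous component `E_{F,D,P}` of `𝔄_{n,k,ℓ}`. -/
def Esub (n k l : ℕ) (F D : ℕ →₀ ℕ) (Pv : Fin l → ℕ) : Submodule ℂ (PRing n k l) where
  carrier := {f | f ∈ invariants n k l ∧
    (∀ i : ℕ, 1 ≤ i → i ≤ n → HomogOn n k l f (rowSet n k l i) (F (i - 1))) ∧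
    (∀ j : ℕ, 1 ≤ j → j ≤ k → HomogOn n k l f (colSet n k l j) (D (j - 1))) ∧
    (∀ t : Fin l, HomogOn n k l f (tSet n k l ((t : ℕ) + 1)) (Pv t))}
  add_mem' := by
    rintro f g ⟨hf0, hf1, hf2, hf3⟩ ⟨hg0, hg1, hg2, hg3⟩
    exact ⟨add_mem hf0 hg0,
      fun i h1 h2 => homogOn_add (hf1 i h1 h2) (hg1 i h1 h2),
      fun j h1 h2 => homogOn_add (hf2 j h1 h2) (hg2 j h1 h2),
      fun t => homogOn_add (hf3 t) (hg3 t)⟩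
  zero_mem' := by
    refine ⟨zero_mem _, fun i _ _ α hα => ?_, fun j _ _ α hα => ?_, fun t α hα => ?_⟩ <;>
      simp at hα
  smul_mem' := by
    rintro c f ⟨hf0, hf1, hf2, hf3⟩
    refine ⟨(invariants n k l).smul_mem hf0 c,
      fun i h1 h2 α hα => hf1 i h1 h2 α (MvPolynomial.support_smul hα),
      fun j h1 h2 α hα => hf2 j h1 h2 α (MvPolynomial.support_smul hα),
      fun t α hα => hf3 t α (MvPolynomial.support_smul hα)⟩

/-- The set of leading monomials of nonzero elements of `𝔄_{n,k,ℓ}`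
(as monic monomial polynomials). -/
def LMset (n k l : ℕ) : Set (PRing n k l) :=
  {m | ∃ f ∈ invariants n k l, ∃ α, IsLeadMon n k l f α ∧
    m = MvPolynomial.monomial α (1 : ℂ)}


/-! ### Block for Statement 1 : the quotient `𝒫(M_{n,k+ℓ})/J` -/

abbrev QRing (n m : ℕ) : Type := MvPolynomial (Fin n × Fin m) ℂ

/-- `r_{i,j} = ∑_{a=1}^n x_{a,i} x_{n-a+1,j}`. -/
def rQ (n m : ℕ) (i j : Fin m) : QRing n m := ∑ a : Fin n, X (a, i) * X (a.rev, j)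

/-- The ideal `J` generated by `{r_{i,j} : 1 ≤ i,j ≤ k} ∪ {r_{k+j,k+j} : 1 ≤ j ≤ ℓ}`. -/
def JId (n k l : ℕ) : Ideal (QRing n (k + l)) :=
  Ideal.span ({p | ∃ i j : Fin (k + l), (i : ℕ) < k ∧ (j : ℕ) < k ∧ p = rQ n (k + l) i j} ∪
    {p | ∃ j : Fin (k + l), k ≤ (j : ℕ) ∧ p = rQ n (k + l) j j})

/-- The substitution `x_{i,j} ↦ (g⁻¹ X h)_{i,j}` on `𝒫(M_{n,m})`. -/
def actQ (n m : ℕ) (g : Matrix (Fin n) (Fin n) ℂ) (h : Matrix (Fin m) (Fin m) ℂ) :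
    QRing n m →ₐ[ℂ] QRing n m :=
  aeval fun p => ∑ a : Fin n, ∑ b : Fin m, C (g⁻¹ p.1 a * h b p.2) * X (a, b)

/-- The matrix of the symmetric bilinear form `⟨u,v⟩ = ∑ u_a v_{n-a+1}`. -/
def flipMat (n : ℕ) : Matrix (Fin n) (Fin n) ℂ := fun i j => if j = i.rev then 1 else 0

/-- `g ∈ SO_n` : `g` preserves the form and has determinant 1. -/
def IsSO (n : ℕ) (g : Matrix (Fin n) (Fin n) ℂ) : Prop :=
  g.transpose * flipMat n * g = flipMat n ∧ g.det = 1

/-- `diag(h, 1_ℓ)`, the embedding of `GL_k` into `GL_{k+ℓ}`. -/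
def embedU (k l : ℕ) (h : Matrix (Fin k) (Fin k) ℂ) : Matrix (Fin (k + l)) (Fin (k + l)) ℂ :=
  fun i j =>
    if hij : (i : ℕ) < k ∧ (j : ℕ) < k then h ⟨i.val, hij.1⟩ ⟨j.val, hij.2⟩
    else if i = j then 1 else 0

/-- The invariants `(𝒫(M_{n,k+ℓ})/J)^{U_{SO_n} × U_k}` (invariance tested on every
representative). -/
def SqSet (n k l : ℕ) : Set (QRing n (k + l) ⧸ JId n k l) :=
  {q | ∀ (g : Matrix (Fin n) (Fin n) ℂ) (h : Matrix (Fin k) (Fin k) ℂ),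
      IsUU g → IsSO n g → IsUU h →
      ∀ f : QRing n (k + l), Ideal.Quotient.mk (JId n k l) f = q →
        Ideal.Quotient.mk (JId n k l) (actQ n (k + l) g (embedU k l h) f) = q}

/-! ### Block for Statement 16 : the `Sp_{2n}` Pieri algebra -/

abbrev QSp (n k : ℕ) : Type := MvPolynomial (Fin (2 * n) × Fin k) ℂ
abbrev YRing (n l : ℕ) : Type := MvPolynomial (Fin (2 * n) × Fin l) ℂ

/-- The matrix of the symplectic form `(u,v) = ∑_{a=1}^n (u_a v_{2n+1-a} - u_{2n+1-a} v_a)`. -/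
def symplMat (n : ℕ) : Matrix (Fin (2 * n)) (Fin (2 * n)) ℂ :=
  fun i j => if j = i.rev then (if (i : ℕ) < n then 1 else -1) else 0

def IsSp (n : ℕ) (g : Matrix (Fin (2 * n)) (Fin (2 * n)) ℂ) : Prop :=
  g.transpose * symplMat n * g = symplMat n

/-- The substitution `x_{i,j} ↦ (gᵀ T h)_{i,j}` on `𝒫(M_{2n,k})`. -/
def actSp (n k : ℕ) (g : Matrix (Fin (2 * n)) (Fin (2 * n)) ℂ)
    (h : Matrix (Fin k) (Fin k) ℂ) : QSp n k →ₐ[ℂ] QSp n k :=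
  aeval fun p => ∑ a : Fin (2 * n), ∑ b : Fin k, C (g a p.1 * h b p.2) * X (a, b)

/-- The substitution `y_{i,j} ↦ (gᵀ Y_j)_i` on `𝒫(ℂ_1^{2n}) ⊗ ⋯ ⊗ 𝒫(ℂ_ℓ^{2n})`. -/
def actY (n l : ℕ) (g : Matrix (Fin (2 * n)) (Fin (2 * n)) ℂ) : YRing n l →ₐ[ℂ] YRing n l :=
  aeval fun p => ∑ a : Fin (2 * n), C (g a p.1) * X (a, p.2)

/-- The ideal `I_{2n,k}` generated by all `Sp_{2n}`-invariants with zero constant term. -/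
def ISp (n k : ℕ) : Ideal (QSp n k) :=
  Ideal.span {f | (∀ g, IsSp n g → actSp n k g 1 f = f) ∧ MvPolynomial.constantCoeff f = 0}

/-- The canonical surjection `𝒫(M_{2n,k}) ⊗ 𝒫(ℂ^{2n})^{⊗ℓ} → (𝒫(M_{2n,k})/I_{2n,k}) ⊗ ⋯`. -/
def PsiSp (n k l : ℕ) : (QSp n k ⊗[ℂ] YRing n l) →ₐ[ℂ] ((QSp n k ⧸ ISp n k) ⊗[ℂ] YRing n l) :=
  Algebra.TensorProduct.map (Ideal.Quotient.mkₐ ℂ (ISp n k)) (AlgHom.id ℂ (YRing n l))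

/-- The `Sp_{2n}` Pieri algebra `𝒜_{n,k,ℓ}`, as the set of elements of
`(𝒫(M_{2n,k})/I_{2n,k}) ⊗ 𝒫(ℂ_1^{2n}) ⊗ ⋯ ⊗ 𝒫(ℂ_ℓ^{2n})` fixed by `U_{Sp_{2n}} × U_k`
(invariance tested on every representative). -/
def ASpSet (n k l : ℕ) : Set ((QSp n k ⧸ ISp n k) ⊗[ℂ] YRing n l) :=
  {t | ∀ (g : Matrix (Fin (2 * n)) (Fin (2 * n)) ℂ) (h : Matrix (Fin k) (Fin k) ℂ),
      IsSp n g → IsUU g → IsUU h →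
      ∀ w : QSp n k ⊗[ℂ] YRing n l, PsiSp n k l w = t →
        PsiSp n k l (Algebra.TensorProduct.map (actSp n k g h) (actY n l g) w) = t}


/-! ### Block for Statement 15 : flat families -/

/-- A flat `ℂ[t]`-algebra with general fibre `𝔄_{n,k,ℓ}` and special fibre `ℂ[Ω(k,ℓ)]`. -/
structure FlatFam (n k l : ℕ) : Type 1 where
  R : Type
  [cr : CommRing R]
  [algC : Algebra ℂ R]
  [algP : Algebra (Polynomial ℂ) R]
  [tower : IsScalarTower ℂ (Polynomial ℂ) R]
  flat : Module.Flat (Polynomial ℂ) R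
  general : ∀ a : ℂ, a ≠ 0 →
    Nonempty ((R ⧸ Ideal.span {algebraMap (Polynomial ℂ) R (Polynomial.X - Polynomial.C a)})
      ≃ₐ[ℂ] invariants n k l)
  special : Nonempty ((R ⧸ Ideal.span {algebraMap (Polynomial ℂ) R Polynomial.X})
      ≃ₐ[ℂ] AddMonoidAlgebra ℂ (OmegaM k l))

/-! ### Block for Statement 17 : the real cone -/

/-- The elements of `Γ̃(k,ℓ)` as a subtype. -/
abbrev GTElt (k l : ℕ) : Type := ↥(gammaTildeSet k l)

/-- Extension by zero of a function on `Γ̃(k,ℓ)` to the ambient type. -/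
def extZ (k l : ℕ) (f : GTElt k l → ℝ) : GammaAmb → ℝ :=
  fun p => if h : p ∈ gammaTildeSet k l then f ⟨p, h⟩ else 0

/-- `P_j(f)` for a real-valued function `f`. -/
def PfunR (k l : ℕ) (f : GammaAmb → ℝ) (j : ℕ) : ℝ :=
  ((∑ a ∈ Finset.Icc 1 (k + j), f (Sum.inl ((j : ℤ), a)))
      - ∑ b ∈ Finset.Icc 1 (k + j - 1), f (Sum.inl ((j : ℤ) - 1, b)))
    + (∑ a ∈ Finset.Icc 1 k, (f (Sum.inl (-(j : ℤ), a)) - f (Sum.inl (-(j : ℤ) + 1, a))))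
    + (∑ a ∈ Finset.Ico 1 j, f (Sum.inr (a, j)))
    + ∑ b ∈ Finset.Icc (j + 1) l, f (Sum.inr (j, b))

/-- The set `𝒞_{F,D,P}` of nonnegative order-preserving real functions on `Γ̃(k,ℓ)`
with `f_{-ℓ} = D`, `f_ℓ = F` and `P(f) = P`. -/
def CsetFDP (k l : ℕ) (D F : ℕ →₀ ℕ) (P : Fin l → ℕ) : Set (GTElt k l → ℝ) :=
  {f | (∀ a b : GammaAmb, tildeGE k l a b → extZ k l f b ≤ extZ k l f a) ∧
    (∀ p, 0 ≤ f p) ∧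
    (∀ a : ℕ, 1 ≤ a → a ≤ k → extZ k l f (Sum.inl (-(l : ℤ), a)) = (D (a - 1) : ℝ)) ∧
    (∀ a : ℕ, 1 ≤ a → a ≤ k + l → extZ k l f (Sum.inl ((l : ℤ), a)) = (F (a - 1) : ℝ)) ∧
    (∀ j : Fin l, PfunR k l (extZ k l f) ((j : ℕ) + 1) = (P j : ℝ))}

/-! The action of `(g, h)` on the matrix of `η_{(c,I,J)}` is, entry by entry, left multiplication
by the leading `(c+|J|)`-block of `gᵀ` and right multiplication by the leading `(c+|I|)`-block
of `h`, each completed by an identity block. Both factors are unitriangular, so the determinant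
is unchanged. -/

section UnitriangularEntries

variable {d : ℕ}

def natEntry (g : Matrix (Fin d) (Fin d) ℂ) (p a : ℕ) : ℂ :=
  if h : p < d ∧ a < d then g ⟨p, h.1⟩ ⟨a, h.2⟩ else 0

variable {g : Matrix (Fin d) (Fin d) ℂ}

theorem natEntry_of_lt (hg : IsUU g) {p a : ℕ} (h : a < p) : natEntry g p a = 0 := by
  unfold natEntry
  split_ifs
  · exact hg.2 _ _ (Fin.mk_lt_mk.mpr h)
  · rfl

theorem natEntry_self (hg : IsUU g) {a : ℕ} (h : a < d) : natEntry g a a = 1 := by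
  rw [natEntry, dif_pos ⟨h, h⟩]
  exact hg.1 _

theorem sum_smul_eq_sum_range_natEntry {M : Type*} [AddCommMonoid M] [Module ℂ M]
    (hg : IsUU g) (a : Fin d) (F : ℕ → M) :
    ∑ p : Fin d, g p a • F p = ∑ p ∈ Finset.range (a + 1), natEntry g p a • F p := by
  calc ∑ p : Fin d, g p a • F p = ∑ p ∈ Finset.range d, natEntry g p a • F p := by
        rw [← Fin.sum_univ_eq_sum_range]
        simp [natEntry]
    _ = _ := (Finset.sum_subset (Finset.range_subset_range.mpr a.isLt) fun p _ hp => by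
        rw [natEntry_of_lt hg (by simpa using hp), zero_smul]).symm

end UnitriangularEntries

section UAct

variable {n k l : ℕ}

theorem xP_fin (p : Fin n) (q : Fin k) : xP n k l (p + 1) (q + 1) = X (Sum.inl (p, q)) := by
  rw [xP, dif_pos (by omega)]
  rfl

theorem yP_fin (p : Fin n) {j : ℕ} (hj : 1 ≤ j ∧ j ≤ l) :
    yP n k l (p + 1) j = X (Sum.inr (Sum.inl (p, ⟨j - 1, by omega⟩))) := by
  rw [yP, dif_pos (by omega)]
  rfl

theorem rP_fin (q : Fin k) {j : ℕ} (hj : 1 ≤ j ∧ j ≤ l) :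
    rP n k l (q + 1) j = X (Sum.inr (Sum.inr (Sum.inl (q, ⟨j - 1, by omega⟩)))) := by
  rw [rP, dif_pos (by omega)]
  rfl

variable {g : Matrix (Fin n) (Fin n) ℂ} {h : Matrix (Fin k) (Fin k) ℂ}

theorem uAct_xP (hg : IsUU g) (hh : IsUU h) (a : Fin n) (b : Fin k) :
    uAct n k l g h (xP n k l (a + 1) (b + 1)) =
      ∑ p ∈ Finset.range (a + 1), natEntry g p a •
        ∑ q ∈ Finset.range (b + 1), natEntry h q b • xP n k l (p + 1) (q + 1) := by
  rw [← sum_smul_eq_sum_range_natEntry hg a]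
  simp_rw [← sum_smul_eq_sum_range_natEntry hh b, xP_fin, Finset.smul_sum]
  simp [uAct, C_mul']

theorem uAct_yP (hg : IsUU g) (a : Fin n) (j : ℕ) :
    uAct n k l g h (yP n k l (a + 1) j) =
      ∑ p ∈ Finset.range (a + 1), natEntry g p a • yP n k l (p + 1) j := by
  by_cases hj : 1 ≤ j ∧ j ≤ l
  · rw [← sum_smul_eq_sum_range_natEntry hg a]
    simp_rw [yP_fin _ hj]
    simp [uAct, C_mul']
  · simp [yP, hj]

theorem uAct_rP (hh : IsUU h) (b : Fin k) (j : ℕ) :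
    uAct n k l g h (rP n k l (b + 1) j) =
      ∑ q ∈ Finset.range (b + 1), natEntry h q b • rP n k l (q + 1) j := by
  by_cases hj : 1 ≤ j ∧ j ≤ l
  · rw [← sum_smul_eq_sum_range_natEntry hh b]
    simp_rw [rP_fin _ hj]
    simp [uAct, C_mul']
  · simp [rP, hj]

end UAct

section BlockEntry

variable {d : ℕ}

def blockEntry (A : Type*) [CommRing A] [Algebra ℂ A] (g : Matrix (Fin d) (Fin d) ℂ)
    (m a p : ℕ) : A :=
  if a < m then algebraMap ℂ A (natEntry g p a) else if p = a then 1 else 0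

variable {A : Type*} [CommRing A] [Algebra ℂ A] {g : Matrix (Fin d) (Fin d) ℂ}

theorem sum_blockEntry_mul_of_lt (hg : IsUU g) {m N a : ℕ} (ha : a < m) (haN : a < N)
    (F : ℕ → A) :
    ∑ p ∈ Finset.range N, blockEntry A g m a p * F p =
      ∑ p ∈ Finset.range (a + 1), natEntry g p a • F p := by
  refine (Finset.sum_subset (Finset.range_subset_range.mpr haN) fun p _ hp => ?_).symm.trans ?_
  · rw [blockEntry, if_pos ha, natEntry_of_lt hg (by simpa using hp), map_zero, zero_mul]
  · simp [blockEntry, ha, Algebra.smul_def]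

theorem sum_blockEntry_mul_of_le {m N a : ℕ} (ha : m ≤ a) (haN : a < N) (F : ℕ → A) :
    ∑ p ∈ Finset.range N, blockEntry A g m a p * F p = F a := by
  simp [blockEntry, Nat.not_lt.mpr ha, haN]

theorem det_blockEntry (hg : IsUU g) {m N : ℕ} (hm : m ≤ d) :
    (Matrix.of fun a p : Fin N => blockEntry A g m a p).det = 1 := by
  rw [Matrix.det_of_isLowerTriangular _ fun a p hap => ?_]
  · refine Finset.prod_eq_one fun a _ => ?_
    by_cases ha : (a : ℕ) < m
    · simp [blockEntry, ha, natEntry_self hg (ha.trans_le hm)]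
    · simp [blockEntry, ha]
  · have hap' : (a : ℕ) < p := hap
    by_cases ha : (a : ℕ) < m
    · simp [blockEntry, ha, natEntry_of_lt hg hap']
    · simp [blockEntry, ha, hap'.ne']

end BlockEntry

section EtaMatrix

variable {n k l c : ℕ} {I J : Finset ℕ}

def etaEntry (n k l c : ℕ) (I J : Finset ℕ) (a b : ℕ) : PRing n k l :=
  if a < c + J.card then
    if b < c + I.card then xP n k l (a + 1) (b + 1)
    else yP n k l (a + 1) ((J.sort (· ≤ ·)).getD (b - (c + I.card)) 0)
  else
    if b < c + I.card then rP n k l (b + 1) ((I.sort (· ≤ ·)).getD (a - (c + J.card)) 0)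
    else 0

theorem eta_eq_det_etaEntry :
    eta n k l c I J =
      (Matrix.of fun a b : Fin (c + I.card + J.card) => etaEntry n k l c I J a b).det :=
  rfl

variable {g : Matrix (Fin n) (Fin n) ℂ} {h : Matrix (Fin k) (Fin k) ℂ}

theorem uAct_etaEntry (hg : IsUU g) (hh : IsUU h) (hJn : c + J.card ≤ n)
    (hIk : c + I.card ≤ k) {a b : ℕ} (ha : a < c + I.card + J.card)
    (hb : b < c + I.card + J.card) :
    uAct n k l g h (etaEntry n k l c I J a b) =
      ∑ p ∈ Finset.range (c + I.card + J.card), blockEntry (PRing n k l) g (c + J.card) a p *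
        ∑ q ∈ Finset.range (c + I.card + J.card),
          blockEntry (PRing n k l) h (c + I.card) b q * etaEntry n k l c I J p q := by
  by_cases hav : a < c + J.card <;> by_cases hbu : b < c + I.card
  · simp only [sum_blockEntry_mul_of_lt hh hbu hb, sum_blockEntry_mul_of_lt hg hav ha]
    have hx : ∀ p ≤ a, ∀ q ≤ b, etaEntry n k l c I J p q = xP n k l (p + 1) (q + 1) :=
      fun p hp q hq => by simp [etaEntry, show p < c + J.card by omega,
        show q < c + I.card by omega]
    rw [hx a le_rfl b le_rfl, uAct_xP hg hh ⟨a, by omega⟩ ⟨b, by omega⟩]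
    refine Finset.sum_congr rfl fun p hp => congrArg _ <| Finset.sum_congr rfl fun q hq => ?_
    rw [hx p (by simpa [Nat.lt_succ_iff] using hp) q (by simpa [Nat.lt_succ_iff] using hq)]
  · simp only [sum_blockEntry_mul_of_le (Nat.not_lt.mp hbu) hb,
      sum_blockEntry_mul_of_lt hg hav ha]
    have hy : ∀ p ≤ a, etaEntry n k l c I J p b =
        yP n k l (p + 1) ((J.sort (· ≤ ·)).getD (b - (c + I.card)) 0) :=
      fun p hp => by simp [etaEntry, show p < c + J.card by omega, hbu]
    rw [hy a le_rfl, uAct_yP hg ⟨a, by omega⟩]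
    exact Finset.sum_congr rfl fun p hp => by
      rw [hy p (by simpa [Nat.lt_succ_iff] using hp)]
  · simp only [sum_blockEntry_mul_of_lt hh hbu hb,
      sum_blockEntry_mul_of_le (Nat.not_lt.mp hav) ha]
    have hr : ∀ q ≤ b, etaEntry n k l c I J a q =
        rP n k l (q + 1) ((I.sort (· ≤ ·)).getD (a - (c + J.card)) 0) :=
      fun q hq => by simp [etaEntry, hav, show q < c + I.card by omega]
    rw [hr b le_rfl, uAct_rP hh ⟨b, by omega⟩]
    exact Finset.sum_congr rfl fun q hq => by
      rw [hr q (by simpa [Nat.lt_succ_iff] using hq)]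
  · simp only [sum_blockEntry_mul_of_le (Nat.not_lt.mp hbu) hb,
      sum_blockEntry_mul_of_le (Nat.not_lt.mp hav) ha]
    simp [etaEntry, hav, hbu]

theorem etaMatrix_map_uAct (hg : IsUU g) (hh : IsUU h) (hJn : c + J.card ≤ n)
    (hIk : c + I.card ≤ k) :
    (Matrix.of fun a b : Fin (c + I.card + J.card) => etaEntry n k l c I J a b).map
        (uAct n k l g h) =
      Matrix.of (fun a p : Fin (c + I.card + J.card) =>
          blockEntry (PRing n k l) g (c + J.card) a p) *
        Matrix.of (fun a b : Fin (c + I.card + J.card) => etaEntry n k l c I J a b) *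
        (Matrix.of fun b q : Fin (c + I.card + J.card) =>
          blockEntry (PRing n k l) h (c + I.card) b q).transpose := by
  refine Matrix.ext fun a b => ?_
  rw [Matrix.map_apply, Matrix.of_apply, uAct_etaEntry hg hh hJn hIk a.isLt b.isLt,
    Matrix.mul_assoc, Matrix.mul_apply, Finset.sum_range]
  refine Finset.sum_congr rfl fun p _ => congrArg _ ?_
  rw [Matrix.mul_apply, Finset.sum_range]
  exact Finset.sum_congr rfl fun q _ => mul_comm _ _

end EtaMatrix

theorem statement_7_general (n k l : ℕ)
    (hst : 2 * (k + l) < n) (c : ℕ) (hc : c ≤ k) (I J : Finset ℕ)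
    (hJ : J ⊆ Finset.Icc 1 l) (hu : I.card ≤ k - c) :
    eta n k l c I J ∈ invariants n k l := by
  intro g h hg hh
  have hJl : J.card ≤ l := by simpa using Finset.card_le_card hJ
  rw [eta_eq_det_etaEntry, AlgHom.map_det, AlgHom.mapMatrix_apply,
    etaMatrix_map_uAct hg hh (by omega) (by omega), Matrix.det_mul, Matrix.det_mul,
    Matrix.det_transpose, det_blockEntry hg (by omega), det_blockEntry hh (by omega),
    one_mul, mul_one]

theorem statement_7 (n k l : ℕ) (hn : 0 < n) (hk : 0 < k) (hl : 0 < l)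
    (hst : 2 * (k + l) < n) (c : ℕ) (hc : c ≤ k) (I J : Finset ℕ)
    (hI : I ⊆ Finset.Icc 1 l) (hJ : J ⊆ Finset.Icc 1 l) (hu : I.card ≤ k - c) :
    eta n k l c I J ∈ invariants n k l :=
  statement_7_general n k l hst c hc I J hJ hu

end Pieri
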